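/- Let L > 0. The family of rational basis functions {φ_n : n ∈ ℤ} is complete in L²(ℝ, ℂ): the closure of the linear span of {φ_n : n ∈ ℤ} (viewed as elements of L²(ℝ, ℂ)) is all of L²(ℝ, ℂ). -/

import Mathlib

/-!
The Cayley map `x ↦ (L + ix) / (L - ix)` extends to an injective continuous map from the one-point
compactification of `ℝ` to the unit circle, so by Stone–Weierstrass its integer powers span a dense
subspace of `C(OnePoint ℝ, ℂ)`; dividing the `n`-th power by `L - ix` gives `φ_n`. For a compactly
supported continuous `g`, the function `g · (L - ix)` lies in `C(OnePoint ℝ, ℂ)`, and a uniform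
`δ`-approximation of it by such powers yields, after division, a combination of the `φ_n` within
`δ / ‖L - ix‖` of `g` pointwise. As `x ↦ ‖L - ix‖⁻¹` is square integrable, this is `O(δ)` in `L²`,
and compactly supported continuous functions are dense in `L²`.
-/

open MeasureTheory

/-- Rational basis function `φ_n(x) = (L + ix)^n / (L - ix)^(n+1)`. -/
noncomputable def ratBasis (L : ℝ) (n : ℤ) (x : ℝ) : ℂ :=
  ((L : ℂ) + Complex.I * x) ^ n / ((L : ℂ) - Complex.I * x) ^ (n + 1)

open Filter Topology Set Submodule Complex ComplexConjugate
open scoped ENNReal NNReal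

section Laurent

variable (R : Type*) {A : Type*} [CommSemiring R] [StarRing R] [Ring A] [StarRing A]
  [Algebra R A] [StarModule R A]

def laurentSubalgebra (u : unitary A) : StarSubalgebra R A where
  toSubalgebra := (span R (range fun n : ℤ => ((u ^ n : unitary A) : A))).toSubalgebra
    (subset_span ⟨0, by simp⟩) fun a b ha hb => by
      refine SetLike.le_def.1 ?_ (mul_mem_mul ha hb)
      rw [span_mul_span, span_le]
      rintro _ ⟨_, ⟨m, rfl⟩, _, ⟨n, rfl⟩, rfl⟩
      exact subset_span ⟨m + n, by simp [zpow_add]⟩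
  star_mem' {a} ha := by
    induction ha using span_induction with
    | mem a ha =>
      obtain ⟨n, rfl⟩ := ha
      exact subset_span ⟨-n, by simp [← Unitary.coe_star, Unitary.star_eq_inv, zpow_neg]⟩
    | zero => simp
    | add a b _ _ ha hb => simpa using add_mem ha hb
    | smul c a _ ha => simpa using smul_mem _ (star c) ha

end Laurent

lemma laurentSubalgebra_topologicalClosure_eq_top {X : Type*} [TopologicalSpace X]
    [CompactSpace X] {u : unitary C(X, ℂ)} (hu : Function.Injective (u : C(X, ℂ))) :
    (laurentSubalgebra ℂ u).topologicalClosure = ⊤ :=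
  ContinuousMap.starSubalgebra_topologicalClosure_eq_top_of_separatesPoints _
    fun _ _ hxy => ⟨u, ⟨u, subset_span ⟨1, by simp⟩, rfl⟩, fun h => hxy (hu h)⟩

lemma ContinuousMap.unitary_zpow_apply {X : Type*} [TopologicalSpace X] (u : unitary C(X, ℂ))
    (n : ℤ) (x : X) : ((u ^ n : unitary C(X, ℂ)) : C(X, ℂ)) x = (u : C(X, ℂ)) x ^ n := by
  let ev : C(X, ℂ) →⋆* ℂ :=
    { (ContinuousMap.evalStarAlgHom ℂ ℂ x : C(X, ℂ) →* ℂ) with map_star' := fun _ => rfl }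
  have h := congrArg Subtype.val (map_zpow (Unitary.map ev) u n)
  rwa [Unitary.coe_map, Unitary.coe_zpow, Unitary.coe_map] at h

lemma exists_mem_span_toLp_ae_eq {α ι 𝕜 E : Type*} [MeasurableSpace α] {μ : Measure α}
    {p : ℝ≥0∞} [NormedField 𝕜] [NormedAddCommGroup E] [NormedSpace 𝕜 E] {f : ι → α → E}
    (hf : ∀ i, MemLp (f i) p μ) {q : α → E} (hq : q ∈ span 𝕜 (range f)) :
    ∃ y ∈ span 𝕜 (range fun i => (hf i).toLp (f i)), y =ᵐ[μ] q := by
  induction hq using span_induction with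
  | mem q hq =>
    obtain ⟨i, rfl⟩ := hq
    exact ⟨_, subset_span ⟨i, rfl⟩, (hf i).coeFn_toLp⟩
  | zero => exact ⟨0, zero_mem _, Lp.coeFn_zero _ _ _⟩
  | add q r _ _ hq hr =>
    obtain ⟨y, hy, hyq⟩ := hq
    obtain ⟨z, hz, hzr⟩ := hr
    exact ⟨y + z, add_mem hy hz, (Lp.coeFn_add y z).trans (hyq.add hzr)⟩
  | smul c q _ hq =>
    obtain ⟨y, hy, hyq⟩ := hq
    exact ⟨c • y, smul_mem _ c hy, (Lp.coeFn_smul c y).trans (hyq.const_smul c)⟩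

section Cayley

variable {L : ℝ}

lemma ofReal_sub_I_mul_ne_zero (hL : L ≠ 0) (x : ℝ) : (L : ℂ) - I * x ≠ 0 := fun h => by
  simpa [hL] using congrArg re h

lemma ofReal_add_I_mul_eq_conj (x : ℝ) : (L : ℂ) + I * x = conj ((L : ℂ) - I * x) := by
  simp

lemma sq_norm_ofReal_sub_I_mul (x : ℝ) : ‖(L : ℂ) - I * x‖ ^ 2 = L ^ 2 + x ^ 2 := by
  rw [Complex.sq_norm, normSq_apply]
  simp [sq]

noncomputable def cayley (L x : ℝ) : ℂ := ((L : ℂ) + I * x) / ((L : ℂ) - I * x)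

lemma ratBasis_eq_cayley_zpow_div (hL : L ≠ 0) (n : ℤ) (x : ℝ) :
    ratBasis L n x = cayley L x ^ n / ((L : ℂ) - I * x) := by
  rw [ratBasis, cayley, div_zpow, div_div, ← zpow_add_one₀ (ofReal_sub_I_mul_ne_zero hL x)]

lemma norm_cayley (hL : L ≠ 0) (x : ℝ) : ‖cayley L x‖ = 1 := by
  rw [cayley, norm_div, ofReal_add_I_mul_eq_conj, norm_conj,
    div_self (norm_ne_zero_iff.2 (ofReal_sub_I_mul_ne_zero hL x))]

lemma cayley_ne_neg_one (hL : L ≠ 0) (x : ℝ) : cayley L x ≠ -1 := fun h => by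
  rw [cayley, div_eq_iff (ofReal_sub_I_mul_ne_zero hL x)] at h
  exact hL (by exact_mod_cast (by linear_combination h / 2 : (L : ℂ) = 0))

lemma cayley_injective (hL : L ≠ 0) : Function.Injective (cayley L) := fun x y h => by
  rw [cayley, cayley, div_eq_div_iff (ofReal_sub_I_mul_ne_zero hL x)
    (ofReal_sub_I_mul_ne_zero hL y)] at h
  have hLI : 2 * (L : ℂ) * I ≠ 0 := by simp [hL, I_ne_zero]
  exact_mod_cast mul_left_cancel₀ hLI (by linear_combination h : 2 * (L : ℂ) * I * x = _ * y)

lemma continuous_cayley (hL : L ≠ 0) : Continuous (cayley L) :=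
  .div (by fun_prop) (by fun_prop) (ofReal_sub_I_mul_ne_zero hL)

lemma tendsto_cayley_cocompact (hL : L ≠ 0) : Tendsto (cayley L) (cocompact ℝ) (𝓝 (-1)) := by
  -- `cayley L x = -1 + 2L / (L - ix)` and `|x| ≤ ‖L - ix‖`
  have hnorm : Tendsto (fun x : ℝ => ‖(L : ℂ) - I * x‖) (cocompact ℝ) atTop :=
    tendsto_atTop_mono (fun x => by simpa using abs_im_le_norm ((L : ℂ) - I * x))
      tendsto_norm_cocompact_atTop
  have hdiv : Tendsto (fun x : ℝ => 2 * (L : ℂ) / ((L : ℂ) - I * x)) (cocompact ℝ) (𝓝 0) := by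
    rw [tendsto_zero_iff_norm_tendsto_zero]
    simpa only [norm_div] using tendsto_const_nhds.div_atTop hnorm
  have hsum := (tendsto_const_nhds (x := (-1 : ℂ))).add hdiv
  rw [add_zero] at hsum
  refine hsum.congr fun x => ?_
  rw [cayley, eq_div_iff (ofReal_sub_I_mul_ne_zero hL x), add_mul,
    div_mul_cancel₀ _ (ofReal_sub_I_mul_ne_zero hL x)]
  ring

noncomputable def cayleyUnitary (hL : L ≠ 0) : unitary C(OnePoint ℝ, ℂ) :=
  ⟨OnePoint.continuousMapMk ⟨cayley L, continuous_cayley hL⟩ (-1)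
    (by rw [coclosedCompact_eq_cocompact]; exact tendsto_cayley_cocompact hL), by
    rw [Unitary.mem_iff_star_mul_self]
    ext z
    induction z using OnePoint.rec with
    | infty =>
      change conj (-1 : ℂ) * -1 = 1
      simp
    | coe x =>
      change conj (cayley L x) * cayley L x = 1
      rw [conj_mul', norm_cayley hL]
      simp⟩

lemma cayleyUnitary_apply_coe (hL : L ≠ 0) (x : ℝ) :
    (cayleyUnitary hL : C(OnePoint ℝ, ℂ)) x = cayley L x := rfl

lemma cayleyUnitary_injective (hL : L ≠ 0) :
    Function.Injective (cayleyUnitary hL : C(OnePoint ℝ, ℂ)) := by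
  intro a b h
  induction a using OnePoint.rec <;> induction b using OnePoint.rec
  · rfl
  · exact absurd h.symm (cayley_ne_neg_one hL _)
  · exact absurd h (cayley_ne_neg_one hL _)
  · exact congrArg _ (cayley_injective hL h)

lemma memLp_inv_norm_ofReal_sub_I_mul (hL : L ≠ 0) :
    MemLp (fun x : ℝ => ‖(L : ℂ) - I * x‖⁻¹) 2 volume := by
  have hcont : Continuous fun x : ℝ => ‖(L : ℂ) - I * x‖⁻¹ :=
    .inv₀ (by fun_prop) fun x => norm_ne_zero_iff.2 (ofReal_sub_I_mul_ne_zero hL x)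
  rw [memLp_two_iff_integrable_sq_norm hcont.aestronglyMeasurable]
  have hsq : (fun x : ℝ => ‖‖(L : ℂ) - I * x‖⁻¹‖ ^ 2) =
      fun x => (L ^ 2)⁻¹ * (1 + (x / L) ^ 2)⁻¹ := by
    ext x
    rw [norm_inv, norm_norm, inv_pow, sq_norm_ofReal_sub_I_mul]
    field_simp
  rw [hsq]
  exact (integrable_inv_one_add_sq.comp_div hL).const_mul _

variable (L) in
noncomputable def restrictDivDenom : C(OnePoint ℝ, ℂ) →ₗ[ℂ] (ℝ → ℂ) where
  toFun p x := p x / ((L : ℂ) - I * x)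
  map_add' p q := by ext x; simp [add_div]
  map_smul' c p := by ext x; simp [mul_div_assoc]

lemma restrictDivDenom_apply (p : C(OnePoint ℝ, ℂ)) (x : ℝ) :
    restrictDivDenom L p x = p x / ((L : ℂ) - I * x) := rfl

lemma restrictDivDenom_cayleyUnitary_zpow (hL : L ≠ 0) (n : ℤ) :
    restrictDivDenom L ((cayleyUnitary hL ^ n : unitary C(OnePoint ℝ, ℂ)) : C(OnePoint ℝ, ℂ)) =
      ratBasis L n := by
  ext x
  rw [restrictDivDenom_apply, ContinuousMap.unitary_zpow_apply, ratBasis_eq_cayley_zpow_div hL,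
    cayleyUnitary_apply_coe]

lemma restrictDivDenom_mem_span_ratBasis (hL : L ≠ 0) {p : C(OnePoint ℝ, ℂ)}
    (hp : p ∈ laurentSubalgebra ℂ (cayleyUnitary hL)) :
    restrictDivDenom L p ∈ span ℂ (range (ratBasis L)) := by
  have hmap := mem_map_of_mem (f := restrictDivDenom L) hp
  rwa [map_span, ← range_comp, Function.comp_def,
    funext (restrictDivDenom_cayleyUnitary_zpow hL)] at hmap

lemma exists_mem_span_ratBasis_eLpNorm_sub_lt (hL : L ≠ 0) {g : ℝ → ℂ} (hg : Continuous g)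
    (hg_supp : HasCompactSupport g) {ε : ℝ≥0∞} (hε : ε ≠ 0) :
    ∃ q ∈ span ℂ (range (ratBasis L)), eLpNorm (g - q) 2 volume < ε := by
  obtain ⟨δ, hδ, hδε⟩ :=
    ENNReal.exists_nnreal_pos_mul_lt (memLp_inv_norm_ofReal_sub_I_mul hL).eLpNorm_ne_top hε
  -- `g · (L - ix)` has compact support, so it extends continuously by `0` at `∞`
  let G : C(OnePoint ℝ, ℂ) := OnePoint.continuousMapMk ⟨fun x => g x * ((L : ℂ) - I * x),
      by fun_prop⟩ 0 (by rw [coclosedCompact_eq_cocompact]; exact hg_supp.mul_right.is_zero_at_infty)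
  have hG : G ∈ closure (laurentSubalgebra ℂ (cayleyUnitary hL) : Set C(OnePoint ℝ, ℂ)) := by
    rw [← StarSubalgebra.topologicalClosure_coe,
      laurentSubalgebra_topologicalClosure_eq_top (cayleyUnitary_injective hL)]
    trivial
  obtain ⟨p, hp, hGp⟩ := Metric.mem_closure_iff.1 hG δ (by exact_mod_cast hδ)
  refine ⟨restrictDivDenom L p, restrictDivDenom_mem_span_ratBasis hL hp, lt_of_le_of_lt ?_ hδε⟩
  refine eLpNorm_le_nnreal_smul_eLpNorm_of_ae_le_mul (ae_of_all _ fun x => ?_) 2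
  have hden := ofReal_sub_I_mul_ne_zero hL x
  rw [← NNReal.coe_le_coe, NNReal.coe_mul, coe_nnnorm, coe_nnnorm]
  calc ‖g x - restrictDivDenom L p x‖ = ‖G x - p x‖ / ‖(L : ℂ) - I * x‖ := by
        change _ = ‖(g x * ((L : ℂ) - I * x) - p x)‖ / _
        rw [restrictDivDenom_apply, ← norm_div, sub_div, mul_div_cancel_right₀ _ hden]
    _ ≤ δ / ‖(L : ℂ) - I * x‖ := by
        gcongr
        have hGpx := ContinuousMap.dist_apply_le_dist (f := G) (g := p) (x : OnePoint ℝ)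
        rw [dist_eq_norm] at hGpx
        exact hGpx.trans hGp.le
    _ = δ * ‖‖(L : ℂ) - I * x‖⁻¹‖ := by rw [norm_inv, norm_norm, div_eq_mul_inv]

lemma exists_mem_span_ratBasis_edist_toLp_lt (hL : L ≠ 0)
    (hmem : ∀ n : ℤ, MemLp (ratBasis L n) 2 volume) {g : ℝ → ℂ} (hg : Continuous g)
    (hg_supp : HasCompactSupport g) (hg_mem : MemLp g 2 volume) {ε : ℝ≥0∞} (hε : ε ≠ 0) :
    ∃ y ∈ span ℂ (range fun n : ℤ => (hmem n).toLp (ratBasis L n)),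
      edist (hg_mem.toLp g) y < ε := by
  obtain ⟨q, hq, hgq⟩ := exists_mem_span_ratBasis_eLpNorm_sub_lt hL hg hg_supp hε
  obtain ⟨y, hy, hyq⟩ := exists_mem_span_toLp_ae_eq hmem hq
  refine ⟨y, hy, ?_⟩
  rwa [Lp.edist_def, eLpNorm_congr_ae (hg_mem.coeFn_toLp.sub hyq)]

end Cayley

/-- The family `{φ_n : n ∈ ℤ}` is complete in `L²(ℝ, ℂ)`: the closure of its
linear span is all of `L²(ℝ, ℂ)`. -/
theorem ratBasis_complete (L : ℝ) (hL : 0 < L)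
    (hmem : ∀ n : ℤ, MemLp (ratBasis L n) 2 (volume : Measure ℝ)) :
    (Submodule.span ℂ
      (Set.range fun n : ℤ => (hmem n).toLp (ratBasis L n))).topologicalClosure = ⊤ := by
  refine eq_top_iff'.2 fun f => ?_
  rw [← SetLike.mem_coe, topologicalClosure_coe, EMetric.mem_closure_iff]
  intro ε hε
  have hε2 : ε / 2 ≠ 0 := (ENNReal.half_pos hε.ne').ne'
  obtain ⟨g, hg_supp, hfg, hg, hg_mem⟩ :=
    (Lp.memLp f).exists_hasCompactSupport_eLpNorm_sub_le (by norm_num) hε2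
  obtain ⟨y, hy, hgy⟩ :=
    exists_mem_span_ratBasis_edist_toLp_lt hL.ne' hmem hg hg_supp hg_mem hε2
  refine ⟨y, hy, ?_⟩
  have hfg' : edist f (hg_mem.toLp g) ≤ ε / 2 := by
    rwa [Lp.edist_def, eLpNorm_congr_ae (EventuallyEq.rfl.sub hg_mem.coeFn_toLp)]
  calc edist f y ≤ edist f (hg_mem.toLp g) + edist (hg_mem.toLp g) y := edist_triangle _ _ _
    _ < ε / 2 + ε / 2 := ENNReal.add_lt_add_of_le_of_lt (edist_ne_top _ _) hfg' hgy
    _ = ε := ENNReal.add_halves ε
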